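/- Let F be the free group on generators a_1, ..., a_n and let w = a_{i_1} ⋯ a_{i_k} be a word (a finite list of generators, no inverses). For a subset S ⊆ {a_1, ..., a_n}, call a word S-connected if the positions of letters belonging to S form a contiguous interval (all letters between the first and last occurrence of a letter of S are in S). Then for every word w and every nonempty S, there exists an S-connected word w_⋆ such that: (1) the subsequence of letters of w_⋆ lying in S equals the subsequence of letters of w lying in S (in the same order); (2) w_⋆ and w represent the same element of F (where commutator symbols in w_⋆ are interpreted as group commutators); (3) every letter of w_⋆ is either a letter of w or a commutator [x, y] of products of letters of w. -/

import Mathlib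

/-- The letter `x` is (the image in the free group of) a generator belonging to `S`. -/
def inS {n : ℕ} (S : Finset (Fin n)) (x : FreeGroup (Fin n)) : Prop :=
  ∃ i ∈ S, x = FreeGroup.of i

/-- `u` is a product of letters of the word `w`. -/
def isProdOfLetters {n : ℕ} (w : List (Fin n)) (u : FreeGroup (Fin n)) : Prop :=
  ∃ l : List (Fin n), (∀ a ∈ l, a ∈ w) ∧ u = (l.map FreeGroup.of).prod

/-!
Processing `w` from the left, keep it in the form `N · T`, where `T` is the subsequence of
`S`-letters read so far and `N` contains no `S`-letter. Appending an `S`-letter extends `T`;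
appending any other letter `a` uses `T · a = [T, a] · a · T` to move `[T, a] · a` into `N`.
A commutator is never an `S`-letter, since it vanishes under the abelianisation `F → ℤ`.
-/

open commutatorElement

lemma FreeGroup.commutatorElement_ne_of {α : Type*} (u v : FreeGroup α) (a : α) :
    ⁅u, v⁆ ≠ FreeGroup.of a := by
  intro h
  let f : FreeGroup α →* Multiplicative ℤ := FreeGroup.lift fun _ => Multiplicative.ofAdd 1
  have hcomm : f ⁅u, v⁆ = 1 := by
    rw [map_commutatorElement, commutatorElement_eq_one_iff_commute]
    exact Commute.all _ _
  rw [h] at hcomm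
  simp [f] at hcomm

lemma mul_eq_commutatorElement_mul_mul {G : Type*} [Group G] (g h : G) :
    g * h = ⁅g, h⁆ * h * g := by
  rw [commutatorElement_def]
  group

lemma List.pred_get_of_le_of_append {α : Type*} {p : α → Prop} {l₁ l₂ : List α}
    (h₁ : ∀ x ∈ l₁, ¬ p x) (h₂ : ∀ x ∈ l₂, p x) {i j : Fin (l₁ ++ l₂).length}
    (hij : i ≤ j) (hi : p ((l₁ ++ l₂).get i)) : p ((l₁ ++ l₂).get j) := by
  have hi₁ : l₁.length ≤ i := by
    by_contra! hlt
    refine h₁ _ ?_ hi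
    rw [List.get_eq_getElem, List.getElem_append_left hlt]
    exact List.getElem_mem hlt
  apply h₂
  rw [List.get_eq_getElem, List.getElem_append_right (hi₁.trans hij)]
  exact List.getElem_mem _

section Words

variable {n : ℕ}

lemma inS_of_iff_mem (S : Finset (Fin n)) (i : Fin n) : inS S (FreeGroup.of i) ↔ i ∈ S :=
  ⟨fun ⟨_, hj, h⟩ => FreeGroup.of_injective h ▸ hj, fun h => ⟨i, h, rfl⟩⟩

lemma not_inS_commutatorElement (S : Finset (Fin n)) (u v : FreeGroup (Fin n)) :
    ¬ inS S ⁅u, v⁆ :=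
  fun ⟨i, _, h⟩ => FreeGroup.commutatorElement_ne_of u v i h

open Classical in
lemma filter_inS_map_of (S : Finset (Fin n)) (w : List (Fin n)) :
    (w.map FreeGroup.of).filter (fun x => decide (inS S x)) =
      (w.filter (· ∈ S)).map FreeGroup.of := by
  rw [List.filter_map]
  congr 1
  exact List.filter_congr fun i _ => by simp [inS_of_iff_mem]

lemma isProdOfLetters.mono {w w' : List (Fin n)} (hw : w ⊆ w') {u : FreeGroup (Fin n)}
    (hu : isProdOfLetters w u) : isProdOfLetters w' u :=
  let ⟨l, hl, hu⟩ := hu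
  ⟨l, fun a ha => hw (hl a ha), hu⟩

lemma isProdOfLetters_prod_map_of {w l : List (Fin n)} (hl : l ⊆ w) :
    isProdOfLetters w (l.map FreeGroup.of).prod :=
  ⟨l, fun _ ha => hl ha, rfl⟩

def IsLetterOrCommutator (w : List (Fin n)) (x : FreeGroup (Fin n)) : Prop :=
  (∃ i ∈ w, x = FreeGroup.of i) ∨
    ∃ u v : FreeGroup (Fin n), isProdOfLetters w u ∧ isProdOfLetters w v ∧ x = ⁅u, v⁆

lemma IsLetterOrCommutator.mono {w w' : List (Fin n)} (hw : w ⊆ w') {x : FreeGroup (Fin n)}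
    (hx : IsLetterOrCommutator w x) : IsLetterOrCommutator w' x := by
  rcases hx with ⟨i, hi, rfl⟩ | ⟨u, v, hu, hv, rfl⟩
  · exact Or.inl ⟨i, hw hi, rfl⟩
  · exact Or.inr ⟨u, v, hu.mono hw, hv.mono hw, rfl⟩

lemma exists_prod_eq_mul_prod_filter (S : Finset (Fin n)) (w : List (Fin n)) :
    ∃ N : List (FreeGroup (Fin n)),
      (∀ x ∈ N, ¬ inS S x) ∧ (∀ x ∈ N, IsLetterOrCommutator w x) ∧
      N.prod * ((w.filter (· ∈ S)).map FreeGroup.of).prod = (w.map FreeGroup.of).prod := by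
  induction w using List.reverseRecOn with
  | nil => exact ⟨[], by simp, by simp, by simp⟩
  | append_singleton w a ih =>
    obtain ⟨N, hN_notS, hN_letters, hprod⟩ := ih
    have hsub : w ⊆ w ++ [a] := List.subset_append_left w [a]
    by_cases ha : a ∈ S
    · refine ⟨N, hN_notS, fun x hx => (hN_letters x hx).mono hsub, ?_⟩
      simp [List.filter_append, ha, ← hprod, mul_assoc]
    · set T := ((w.filter (· ∈ S)).map FreeGroup.of).prod
      refine ⟨N ++ [⁅T, FreeGroup.of a⁆, FreeGroup.of a], ?_, ?_, ?_⟩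
      · simp only [List.mem_append, List.mem_cons, List.not_mem_nil, or_false]
        rintro x (hx | rfl | rfl)
        exacts [hN_notS x hx, not_inS_commutatorElement S _ _, (inS_of_iff_mem S a).not.mpr ha]
      · simp only [List.mem_append, List.mem_cons, List.not_mem_nil, or_false]
        rintro x (hx | rfl | rfl)
        · exact (hN_letters x hx).mono hsub
        · refine Or.inr ⟨T, FreeGroup.of a, isProdOfLetters_prod_map_of ?_,
            isProdOfLetters_prod_map_of (l := [a]) (by simp), rfl⟩
          exact fun i hi => hsub (List.mem_of_mem_filter hi)
        · exact Or.inl ⟨a, by simp, rfl⟩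
      · simp [List.filter_append, ha, ← hprod, mul_assoc,
          mul_eq_commutatorElement_mul_mul T (FreeGroup.of a), T]

end Words

open Classical commutatorElement in
theorem stmt_7_general {n : ℕ} (w : List (Fin n)) (S : Finset (Fin n)) :
    ∃ L : List (FreeGroup (Fin n)),
      (∀ i j k : Fin L.length, i ≤ j → j ≤ k →
        inS S (L.get i) → inS S (L.get k) → inS S (L.get j)) ∧
      L.filter (fun x => decide (inS S x)) =
        (w.map FreeGroup.of).filter (fun x => decide (inS S x)) ∧
      L.prod = (w.map FreeGroup.of).prod ∧
      (∀ x ∈ L, (∃ i ∈ w, x = FreeGroup.of i) ∨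
        ∃ u v : FreeGroup (Fin n), isProdOfLetters w u ∧ isProdOfLetters w v ∧ x = ⁅u, v⁆) := by
  obtain ⟨N, hN_notS, hN_letters, hprod⟩ := exists_prod_eq_mul_prod_filter S w
  set T := (w.filter (· ∈ S)).map FreeGroup.of
  have hT_S : ∀ x ∈ T, inS S x := by
    simp only [T, List.mem_map, List.mem_filter, decide_eq_true_eq]
    rintro _ ⟨i, ⟨_, hi⟩, rfl⟩
    exact (inS_of_iff_mem S i).mpr hi
  have hT_letters : ∀ x ∈ T, IsLetterOrCommutator w x := by
    simp only [T, List.mem_map, List.mem_filter]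
    rintro _ ⟨i, ⟨hi, _⟩, rfl⟩
    exact Or.inl ⟨i, hi, rfl⟩
  refine ⟨N ++ T, fun i j _ hij _ hi _ => List.pred_get_of_le_of_append hN_notS hT_S hij hi,
    ?_, by rw [List.prod_append, hprod], ?_⟩
  · rw [filter_inS_map_of, List.filter_append, List.filter_eq_nil_iff.mpr (by simpa using hN_notS),
      List.filter_eq_self.mpr (by simpa using hT_S), List.nil_append]
  · simpa only [List.mem_append, or_imp, forall_and] using ⟨hN_letters, hT_letters⟩

open Classical commutatorElement in
/-- for every word `w` over the generators and every nonempty `S`, there is an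
`S`-connected word `w⋆` (a list `L` of group elements, each a letter of `w` or a commutator of
products of letters of `w`) whose `S`-letters form a contiguous block, appear in the same
order as in `w`, and whose product equals that of `w`. -/
theorem stmt_7 {n : ℕ} (w : List (Fin n)) (S : Finset (Fin n)) (hS : S.Nonempty) :
    ∃ L : List (FreeGroup (Fin n)),
      (∀ i j k : Fin L.length, i ≤ j → j ≤ k →
        inS S (L.get i) → inS S (L.get k) → inS S (L.get j)) ∧
      L.filter (fun x => decide (inS S x)) =
        (w.map FreeGroup.of).filter (fun x => decide (inS S x)) ∧
      L.prod = (w.map FreeGroup.of).prod ∧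
      (∀ x ∈ L, (∃ i ∈ w, x = FreeGroup.of i) ∨
        ∃ u v : FreeGroup (Fin n), isProdOfLetters w u ∧ isProdOfLetters w v ∧ x = ⁅u, v⁆) :=
  stmt_7_general w S
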